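/- arXiv:1602.03474 — 2 statements merged into one kernel-verified Lean document; each statement's English description precedes it below -/
import Mathlib

section
/- Fix Φ ∈ C_c^∞(ℝ^d), radially symmetric, with 1_{B(0,1)} ≤ Φ ≤ 1_{B(0,2)}, and set φ_R(x) := Φ(x/R). Define V₁ := ∫_𝒱 |v'₁| dv'. There exists γ* > 0 such that for every γ ∈ (0,γ*), setting β := γχ/(1+χ) and m̃(x,v) := (1 + γ (v·x)/⟨x⟩ − β |v·x|/⟨x⟩) e^{γ⟨x⟩}, there exist R₀ ≥ 1 and α > 0 such that for every R ≥ R₀ and every (x,v) ∈ ℝ^d × 𝒱 with x·v ≠ 0: (ℒ* m̃)(x,v) − φ_R(x) K(x,v) ∫_𝒱 m̃(x,v') dv' ≤ − α m̃(x,v). (The left-hand side is the dual operator B₁* of B₁ f := −v·∇ₓ f − K f + (1 − φ_R) ∫_𝒱 K(x,v') f(x,v') dv' applied to m̃.) -/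
open MeasureTheory Metric Real Filter
open scoped RealInnerProductSpace ENNReal FourierTransform

noncomputable section

abbrev E (d : ℕ) := EuclideanSpace ℝ (Fin d)

/-- The velocity ball `𝒱 = B(0,V0)`. -/
def VV (d : ℕ) (V0 : ℝ) : Set (E d) := Metric.closedBall 0 V0

/-- Lebesgue measure on `ℝ^d × 𝒱`. -/
def μV (d : ℕ) (V0 : ℝ) : Measure (E d × E d) :=
  (volume : Measure (E d × E d)).restrict (Set.univ ×ˢ VV d V0)

/-- `⟨x⟩ = (1+|x|²)^{1/2}`. -/
def jap {d : ℕ} (x : E d) : ℝ := Real.sqrt (1 + ‖x‖ ^ 2)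

/-- The turning kernel `K(x,v) = 1 + χ sign(x⋅v)`. -/
def turnK {d : ℕ} (χ : ℝ) (x v : E d) : ℝ := 1 + χ * Real.sign ⟪x, v⟫

/-- The dual run-and-tumble operator
`(ℒ*φ)(x,v) = v·∇ₓφ(x,v) + K(x,v) ∫_𝒱 (φ(x,v') - φ(x,v)) dv'`. -/
def Ldual {d : ℕ} (χ V0 : ℝ) (φ : E d × E d → ℝ) (x v : E d) : ℝ :=
  fderiv ℝ (fun y => φ (y, v)) x v +
    turnK χ x v * ∫ v' in VV d V0, (φ (x, v') - φ (x, v))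

/-- The total mass `⟨⟨g⟩⟩`. -/
def mass {d : ℕ} (V0 : ℝ) (g : E d → E d → ℝ) : ℝ :=
  ∫ x, ∫ v in VV d V0, g x v

/-- Test functions `φ ∈ C_c^∞(ℝ^d × ℝ^d)`. -/
def IsTest {d : ℕ} (φ : E d × E d → ℝ) : Prop :=
  ContDiff ℝ (⊤ : ℕ∞) φ ∧ HasCompactSupport φ

/-- Weighted `L¹(m)` norm. -/
def wL1 {d : ℕ} (V0 : ℝ) (m : E d → ℝ) (g : E d → E d → ℝ) : ℝ :=
  ∫ x, ∫ v in VV d V0, |g x v| * m x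

/-- Weak solution in `C([0,∞); L¹(m))` of `∂ₜ f = 𝒜 f`, where `Op` is the formal dual of the
generator `𝒜`, with initial datum `f₀`. -/
def IsWeakSol {d : ℕ} (V0 : ℝ) (Op : (E d × E d → ℝ) → E d → E d → ℝ)
    (m : E d → ℝ) (f : ℝ → E d → E d → ℝ) (f₀ : E d → E d → ℝ) : Prop :=
  f 0 = f₀ ∧
  (∀ t, 0 ≤ t → Integrable (fun p : E d × E d => m p.1 * f t p.1 p.2) (μV d V0)) ∧
  (∀ t, 0 ≤ t → Filter.Tendsto
      (fun s => ∫ x, ∫ v in VV d V0, |f s x v - f t x v| * m x)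
      (nhdsWithin t (Set.Ici 0)) (nhds 0)) ∧
  (∀ φ : E d × E d → ℝ, IsTest φ → ∀ t, 0 ≤ t →
    (∫ x, ∫ v in VV d V0, f t x v * φ (x, v)) -
      (∫ x, ∫ v in VV d V0, f₀ x v * φ (x, v)) =
    ∫ s in (0:ℝ)..t, ∫ x, ∫ v in VV d V0, f s x v * Op φ x v)

/-- The modified exponential weight `m̃`. -/
def mtilde {d : ℕ} (γ β : ℝ) (x v : E d) : ℝ :=
  (1 + γ * ⟪v, x⟫ / jap x - β * |⟪v, x⟫| / jap x) * Real.exp (γ * jap x)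

section Helpers
set_option maxHeartbeats 2000000

open Function

variable {d : ℕ} {V0 : ℝ}

lemma jap_pos (x : E d) : 0 < jap x := Real.sqrt_pos.2 (by positivity)

lemma one_le_jap (x : E d) : 1 ≤ jap x := by
  rw [show (1:ℝ) = Real.sqrt 1 by simp [Real.sqrt_one]]
  exact Real.sqrt_le_sqrt (by nlinarith [sq_nonneg ‖x‖])

lemma jap_sq (x : E d) : jap x ^ 2 = 1 + ‖x‖ ^ 2 := Real.sq_sqrt (by positivity)

lemma hasFDerivAt_jap (x : E d) :
    HasFDerivAt jap ((jap x)⁻¹ • innerSL ℝ x) x := by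
  have h1 : HasFDerivAt (fun y : E d => 1 + ‖y‖ ^ 2) (2 • innerSL ℝ x) x := by
    simpa using ((hasFDerivAt_id x).norm_sq.const_add 1)
  have h2 : HasDerivAt Real.sqrt (1 / (2 * Real.sqrt (1 + ‖x‖^2))) (1 + ‖x‖^2) :=
    Real.hasDerivAt_sqrt (by positivity)
  have := h2.comp_hasFDerivAt x h1
  refine this.congr_fderiv ?_
  ext w
  simp [jap, ContinuousLinearMap.smul_apply]
  field_simp

lemma sign_abs_deriv (x v : E d) (hu : ⟪v,x⟫ ≠ 0) :
    HasFDerivAt (fun y : E d => |⟪v,y⟫|) (Real.sign ⟪v,x⟫ • innerSL ℝ v) x := by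
  have h1 : HasFDerivAt (fun y : E d => ⟪v,y⟫) (innerSL ℝ v) x :=
    (innerSL ℝ v).hasFDerivAt
  rcases hu.lt_or_gt with h | h
  · have := (hasDerivAt_abs_neg h).comp_hasFDerivAt x h1
    rw [Real.sign_of_neg h]
    exact this
  · have := (hasDerivAt_abs_pos h).comp_hasFDerivAt x h1
    rw [Real.sign_of_pos h]
    convert this using 1 <;> rfl

lemma fderiv_mtilde (γ β : ℝ) (x v : E d) (hu : ⟪v,x⟫ ≠ 0) :
    fderiv ℝ (fun y => mtilde γ β y v) x v =
      ((γ - β * Real.sign ⟪v,x⟫) * (‖v‖^2 / jap x - ⟪v,x⟫^2 / (jap x)^3)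
        + (1 + γ * ⟪v,x⟫ / jap x - β * |⟪v,x⟫| / jap x) * (γ * ⟪v,x⟫ / jap x))
        * Real.exp (γ * jap x) := by
  have hj := jap_pos x
  have hjne : jap x ≠ 0 := hj.ne'
  have h1 : HasFDerivAt (fun y : E d => ⟪v,y⟫) (innerSL ℝ v) x :=
    (innerSL ℝ v).hasFDerivAt
  have habs := sign_abs_deriv x v hu
  have hjap := hasFDerivAt_jap x
  have hjinv : HasFDerivAt (fun y : E d => (jap y)⁻¹)
      (-(jap x ^ 2)⁻¹ • ((jap x)⁻¹ • innerSL ℝ x)) x :=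
    (hasDerivAt_inv hjne).comp_hasFDerivAt x hjap
  have hA : HasFDerivAt
      (fun y : E d => 1 + γ * ⟪v,y⟫ * (jap y)⁻¹ - β * |⟪v,y⟫| * (jap y)⁻¹)
      ((((γ * ⟪v,x⟫) • (-(jap x ^ 2)⁻¹ • ((jap x)⁻¹ • innerSL ℝ x)) +
          (jap x)⁻¹ • (γ • innerSL ℝ v))) -
        ((β * |⟪v,x⟫|) • (-(jap x ^ 2)⁻¹ • ((jap x)⁻¹ • innerSL ℝ x)) +
          (jap x)⁻¹ • (β • (Real.sign ⟪v,x⟫ • innerSL ℝ v)))) x :=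
    (((h1.const_mul γ).mul hjinv).const_add 1).sub ((habs.const_mul β).mul hjinv)
  have hexp : HasFDerivAt (fun y : E d => Real.exp (γ * jap y))
      (Real.exp (γ * jap x) • (γ • ((jap x)⁻¹ • innerSL ℝ x))) x :=
    (hjap.const_mul γ).exp
  have hm := hA.mul hexp
  have heq : (fun y : E d => mtilde γ β y v) =
      fun y : E d => (1 + γ * ⟪v,y⟫ * (jap y)⁻¹ - β * |⟪v,y⟫| * (jap y)⁻¹) *
        Real.exp (γ * jap y) := by
    funext y; simp [mtilde, div_eq_mul_inv]
  rw [heq, HasFDerivAt.fderiv (f := fun y : E d => (1 + γ * ⟪v,y⟫ * (jap y)⁻¹ - β * |⟪v,y⟫| * (jap y)⁻¹) *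
          Real.exp (γ * jap y)) hm]
  have hvv : ⟪v,v⟫ = ‖v‖^2 := real_inner_self_eq_norm_sq v
  have hxv : ⟪x,v⟫ = ⟪v,x⟫ := real_inner_comm v x
  have habsu : |⟪v,x⟫| = Real.sign ⟪v,x⟫ * ⟪v,x⟫ := by
    rcases hu.lt_or_gt with h | h
    · rw [Real.sign_of_neg h, abs_of_neg h]; ring
    · rw [Real.sign_of_pos h, abs_of_pos h]; ring
  simp only [ContinuousLinearMap.add_apply, ContinuousLinearMap.sub_apply,
    ContinuousLinearMap.smul_apply, innerSL_apply_apply, smul_eq_mul, hvv, hxv]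
  rw [habsu]
  field_simp
  ring_nf

lemma isCompact_VV : IsCompact (VV d V0) := isCompact_closedBall 0 V0

lemma measurableSet_VV : MeasurableSet (VV d V0) := measurableSet_closedBall

lemma integrableOn_VV {f : E d → ℝ} (hf : Continuous f) : IntegrableOn f (VV d V0) :=
  hf.continuousOn.integrableOn_compact isCompact_VV

lemma odd_setIntegral_VV (x : E d) : ∫ v in VV d V0, ⟪x,v⟫ = 0 := by
  set g : E d → ℝ := Set.indicator (VV d V0) (fun v => ⟪x,v⟫) with hg
  have h1 : ∫ v in VV d V0, ⟪x,v⟫ = ∫ v, g v := by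
    rw [hg, integral_indicator measurableSet_VV]
  have hneg : ∀ v, g (-v) = - g v := by
    intro v
    by_cases hv : v ∈ VV d V0
    · have hv' : -v ∈ VV d V0 := by
        simpa [VV, mem_closedBall, dist_eq_norm] using hv
      rw [hg]; simp only [Set.indicator_of_mem hv, Set.indicator_of_mem hv',
        inner_neg_right]
    · have hv' : -v ∉ VV d V0 := by
        simp only [VV, mem_closedBall, dist_zero_right] at hv ⊢
        simpa using hv
      rw [hg]; simp [Set.indicator_of_notMem hv, Set.indicator_of_notMem hv']
  have h2 : ∫ v, g (-v) = ∫ v, g v := integral_neg_eq_self g volume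
  rw [h1]
  have h3 : ∫ v, g (-v) = - ∫ v, g v := by
    simp_rw [hneg]; exact integral_neg g
  linarith [h3 ▸ h2, h2]

lemma abs_setIntegral_rot (y z : E d) (h : ‖y‖ = ‖z‖) :
    ∫ v in VV d V0, |⟪y,v⟫| = ∫ v in VV d V0, |⟪z,v⟫| := by
  set e : E d ≃ₗᵢ[ℝ] E d := ((ℝ ∙ (y - z))ᗮ.reflection : E d ≃ₗᵢ[ℝ] E d) with he
  have hez : e y = z := Submodule.reflection_sub h
  have hpre : e ⁻¹' (VV d V0) = VV d V0 := by
    ext v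
    simp [VV, mem_closedBall, dist_zero_right, e.norm_map]
  have hmp : MeasurePreserving e := e.measurePreserving
  have hemb : MeasurableEmbedding e := e.toHomeomorph.measurableEmbedding
  calc ∫ v in VV d V0, |⟪y,v⟫|
      = ∫ v in VV d V0, |⟪z, e v⟫| := by
        refine setIntegral_congr_fun measurableSet_VV (fun v _ => ?_)
        rw [← hez, e.inner_map_map]
    _ = ∫ v in e ⁻¹' (VV d V0), |⟪z, e v⟫| := by rw [hpre]
    _ = ∫ w in VV d V0, |⟪z,w⟫| :=
        hmp.setIntegral_preimage_emb hemb (fun w => |⟪z,w⟫|) (VV d V0)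

lemma abs_setIntegral_VV (hd : 1 ≤ d) (x : E d) :
    ∫ v in VV d V0, |⟪x,v⟫| =
      (∫ v in VV d V0, |⟪EuclideanSpace.single (⟨0, hd⟩ : Fin d) (1:ℝ),v⟫|) * ‖x‖ := by
  set e₁ : E d := EuclideanSpace.single (⟨0, hd⟩ : Fin d) (1:ℝ) with he₁
  have hne₁ : ‖e₁‖ = 1 := by simp [he₁, EuclideanSpace.norm_single]
  by_cases hx : x = 0
  · simp [hx]
  · have hnx : ‖x‖ ≠ 0 := norm_ne_zero_iff.2 hx
    have hs : ‖(‖x‖⁻¹ • x : E d)‖ = ‖e₁‖ := by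
      rw [norm_smul, hne₁]
      simp [abs_of_nonneg (inv_nonneg.2 (norm_nonneg x)), inv_mul_cancel₀ hnx]
    have key := abs_setIntegral_rot (V0 := V0) (‖x‖⁻¹ • x) e₁ hs
    have hx' : ∀ v : E d, |⟪x,v⟫| = ‖x‖ * |⟪(‖x‖⁻¹ • x : E d),v⟫| := by
      intro v
      rw [real_inner_smul_left, abs_mul, abs_of_nonneg (inv_nonneg.2 (norm_nonneg x))]
      field_simp
    calc ∫ v in VV d V0, |⟪x,v⟫|
        = ∫ v in VV d V0, ‖x‖ * |⟪(‖x‖⁻¹ • x : E d),v⟫| := by simp_rw [hx']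
      _ = ‖x‖ * ∫ v in VV d V0, |⟪(‖x‖⁻¹ • x : E d),v⟫| := by
          rw [MeasureTheory.integral_const_mul]
      _ = (∫ v in VV d V0, |⟪e₁,v⟫|) * ‖x‖ := by rw [key]; ring

lemma c0_pos (hd : 1 ≤ d) (hvol : volume (VV d V0) = 1) :
    0 < ∫ v in VV d V0, |⟪EuclideanSpace.single (⟨0, hd⟩ : Fin d) (1:ℝ),v⟫| := by
  set e₁ : E d := EuclideanSpace.single (⟨0, hd⟩ : Fin d) (1:ℝ) with he₁
  set f : E d → ℝ := fun v => |⟪e₁,v⟫| with hf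
  have hcont : Continuous f := (innerSL ℝ e₁).continuous.abs
  have hint : IntegrableOn f (VV d V0) := integrableOn_VV hcont
  have hnn : 0 ≤ᵐ[volume.restrict (VV d V0)] f :=
    Filter.Eventually.of_forall fun v => abs_nonneg _
  rw [setIntegral_pos_iff_support_of_nonneg_ae hnn hint]
  set H : Submodule ℝ (E d) := LinearMap.ker ((innerSL ℝ e₁ : E d →L[ℝ] ℝ) : E d →ₗ[ℝ] ℝ)
    with hH
  have hHne : H ≠ ⊤ := by
    intro htop
    have h1 : ⟪e₁,e₁⟫ = (0:ℝ) := by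
      have : e₁ ∈ H := htop ▸ Submodule.mem_top
      simpa [hH, LinearMap.mem_ker] using this
    rw [real_inner_self_eq_norm_sq] at h1
    simp [he₁, EuclideanSpace.norm_single] at h1
  have hH0 : volume (H : Set (E d)) = 0 := Measure.addHaar_submodule volume H hHne
  have hsupp : (H : Set (E d))ᶜ ⊆ support f := by
    intro v hv
    simp only [hH, Set.mem_compl_iff, SetLike.mem_coe, LinearMap.mem_ker] at hv
    simp only [support, hf, Set.mem_setOf_eq, abs_ne_zero]
    simpa using hv
  have hsub : VV d V0 ⊆ (support f ∩ VV d V0) ∪ (H : Set (E d)) := by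
    intro v hv
    by_cases hvH : v ∈ (H : Set (E d))
    · exact Or.inr hvH
    · exact Or.inl ⟨hsupp hvH, hv⟩
  have hge : (1:ℝ≥0∞) ≤ volume (support f ∩ VV d V0) := by
    calc (1:ℝ≥0∞) = volume (VV d V0) := hvol.symm
      _ ≤ volume ((support f ∩ VV d V0) ∪ (H : Set (E d))) := measure_mono hsub
      _ ≤ volume (support f ∩ VV d V0) + volume (H : Set (E d)) := measure_union_le _ _
      _ = volume (support f ∩ VV d V0) := by rw [hH0, add_zero]
  exact lt_of_lt_of_le (by norm_num) hge

lemma c0_le (hd : 1 ≤ d) (hV0 : 0 < V0) (hvol : volume (VV d V0) = 1) :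
    (∫ v in VV d V0, |⟪EuclideanSpace.single (⟨0, hd⟩ : Fin d) (1:ℝ),v⟫|) ≤ V0 := by
  set e₁ : E d := EuclideanSpace.single (⟨0, hd⟩ : Fin d) (1:ℝ) with he₁
  have hne₁ : ‖e₁‖ = 1 := by simp [he₁, EuclideanSpace.norm_single]
  have hbound : ∀ v ∈ VV d V0, |⟪e₁,v⟫| ≤ V0 := by
    intro v hv
    have h1 := abs_real_inner_le_norm e₁ v
    have hvn : ‖v‖ ≤ V0 := by simpa [VV, mem_closedBall, dist_zero_right] using hv
    calc |⟪e₁,v⟫| ≤ ‖e₁‖ * ‖v‖ := h1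
      _ = ‖v‖ := by rw [hne₁, one_mul]
      _ ≤ V0 := hvn
  have hint : IntegrableOn (fun v : E d => |⟪e₁,v⟫|) (VV d V0) :=
    integrableOn_VV ((innerSL ℝ e₁).continuous.abs)
  calc (∫ v in VV d V0, |⟪e₁,v⟫|) ≤ ∫ _v in VV d V0, V0 := by
        refine setIntegral_mono_on hint ?_ measurableSet_VV hbound
        exact integrableOn_const (by rw [hvol]; norm_num)
    _ = V0 := by
        rw [setIntegral_const, measureReal_def, hvol]
        simp

lemma continuous_mtilde_v (γ β : ℝ) (x : E d) :
    Continuous (fun v' : E d => mtilde γ β x v') := by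
  have hrw : (fun v' : E d => ⟪v',x⟫) = fun v' : E d => ⟪x,v'⟫ := by
    funext v'; exact real_inner_comm x v'
  have hcx : Continuous fun v' : E d => ⟪v',x⟫ := by
    rw [hrw]; exact (innerSL ℝ x).continuous
  unfold mtilde
  exact (((continuous_const.add ((continuous_const.mul hcx).div_const _)).sub
    ((continuous_const.mul hcx.abs).div_const _)).mul continuous_const)

lemma integral_mtilde (hd : 1 ≤ d) (hvol : volume (VV d V0) = 1) (γ β : ℝ) (x : E d) :
    ∫ v' in VV d V0, mtilde γ β x v' =
      (1 - β * (∫ v in VV d V0, |⟪EuclideanSpace.single (⟨0, hd⟩ : Fin d) (1:ℝ),v⟫|)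
          * ‖x‖ / jap x) * Real.exp (γ * jap x) := by
  set j := jap x
  set Ex := Real.exp (γ * j) with hEx
  have hsplit : ∀ v' : E d, mtilde γ β x v' =
      Ex + (γ / j * Ex) * ⟪x,v'⟫ + (-(β / j * Ex)) * |⟪x,v'⟫| := by
    intro v'
    rw [mtilde, real_inner_comm v' x]
    ring
  have hi1 : IntegrableOn (fun _ : E d => Ex) (VV d V0) := integrableOn_VV continuous_const
  have hi2 : IntegrableOn (fun v' : E d => (γ / j * Ex) * ⟪x,v'⟫) (VV d V0) :=
    integrableOn_VV (continuous_const.mul (innerSL ℝ x).continuous)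
  have hi3 : IntegrableOn (fun v' : E d => (-(β / j * Ex)) * |⟪x,v'⟫|) (VV d V0) :=
    integrableOn_VV (continuous_const.mul ((innerSL ℝ x).continuous.abs))
  calc ∫ v' in VV d V0, mtilde γ β x v'
      = ∫ v' in VV d V0,
          (Ex + (γ / j * Ex) * ⟪x,v'⟫ + (-(β / j * Ex)) * |⟪x,v'⟫|) := by
        simp_rw [hsplit]
    _ = (∫ _v' in VV d V0, Ex) + (∫ v' in VV d V0, (γ / j * Ex) * ⟪x,v'⟫)
          + ∫ v' in VV d V0, (-(β / j * Ex)) * |⟪x,v'⟫| := by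
        have hi12 : IntegrableOn (fun v' : E d => Ex + (γ / j * Ex) * ⟪x,v'⟫) (VV d V0) :=
          integrableOn_VV (continuous_const.add (continuous_const.mul (innerSL ℝ x).continuous))
        rw [integral_add hi12 hi3, integral_add hi1 hi2]
    _ = Ex + (γ / j * Ex) * (∫ v' in VV d V0, ⟪x,v'⟫)
          + (-(β / j * Ex)) * ∫ v' in VV d V0, |⟪x,v'⟫| := by
        rw [MeasureTheory.integral_const_mul, MeasureTheory.integral_const_mul,
          setIntegral_const, measureReal_def, hvol]
        simp
    _ = _ := by
        rw [odd_setIntegral_VV, abs_setIntegral_VV hd]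
        ring

end Helpers
set_option maxHeartbeats 2000000 in

lemma scalar_core (χ γ β c0 V0 s u j nx nv φx α R₀ : ℝ)
    (hχ0 : 0 < χ) (hχ1 : χ < 1) (hV0 : 0 < V0)
    (hβ : β = γ * χ / (1 + χ)) (hγ0 : 0 < γ)
    (hc0 : 0 < c0) (hc0V : c0 ≤ V0)
    (hs : s = 1 ∧ 0 < u ∨ s = -1 ∧ u < 0)
    (hj1 : 1 ≤ j) (hjnx : j ^ 2 = 1 + nx ^ 2) (hnx0 : 0 ≤ nx)
    (hu : |u| ≤ nv * nx) (hnv : 0 ≤ nv) (hnvV : nv ≤ V0)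
    (hφ0 : 0 ≤ φx) (hφ1 : φx ≤ 1)
    (hγa : γ ≤ 1 / (4 * (V0 + 1) ^ 2)) (hγb : γ ≤ (1 - χ) / (20 * (V0 + 1) ^ 2))
    (hγc : γ ≤ χ ^ 2 / (4 * (V0 + 1)))
    (hγd : γ ≤ (1 - χ) * χ * c0 / (32 * (V0 + 1) ^ 2 * (1 + χ)))
    (hα : α = min ((1 - χ) / 2) ((1 - χ) * β * c0 / 6))
    (hR₀ : R₀ = max 1 (8 * γ * (V0 + 1) ^ 2 / ((1 - χ) * β * c0 / 2)))
    (hcase : (nx < R₀ ∧ φx = 1) ∨ R₀ ≤ nx) :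
    (γ - β * s) * (nv ^ 2 / j - u ^ 2 / j ^ 3)
      + (1 + γ * u / j - β * (s * u) / j) * (γ * u / j)
      + (1 + χ * s) * ((1 - β * c0 * nx / j) - (1 + γ * u / j - β * (s * u) / j))
      - φx * (1 + χ * s) * (1 - β * c0 * nx / j)
    ≤ -α * (1 + γ * u / j - β * (s * u) / j) := by
  have hj0 : (0:ℝ) < j := lt_of_lt_of_le one_pos hj1
  have hnxj : nx ≤ j := by nlinarith only [hjnx, hj0, hnx0]
  have hχ1' : (0:ℝ) < 1 + χ := by linarith
  have hβ0 : 0 < β := by rw [hβ]; positivity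
  have hβγ : β ≤ γ := by
    rw [hβ, div_le_iff₀ hχ1']
    nlinarith only [hγ0, hχ0]
  have hs2 : s * s = 1 := by rcases hs with ⟨h,_⟩|⟨h,_⟩ <;> rw [h] <;> ring
  have hs1 : -1 ≤ s ∧ s ≤ 1 := by
    rcases hs with ⟨h,_⟩|⟨h,_⟩ <;> rw [h] <;> constructor <;> norm_num
  have hsu : s * u = |u| := by
    rcases hs with ⟨h,h'⟩|⟨h,h'⟩
    · rw [h, abs_of_pos h']; ring
    · rw [h, abs_of_neg h']; ring
  set t := u / j with htdef
  set q := nv ^ 2 / j - u ^ 2 / j ^ 3 with hqdef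
  set w := nx / j with hwdef
  have hrw1 : γ * u / j = γ * t := by rw [htdef, mul_div_assoc]
  have hrw2 : β * (s * u) / j = β * (s * t) := by rw [htdef, mul_div_assoc, mul_div_assoc]
  have hrw3 : β * c0 * nx / j = β * c0 * w := by rw [hwdef, mul_div_assoc]
  rw [hrw1, hrw2, hrw3]
  set A := 1 + γ * t - β * (s * t) with hAdef
  have htV : |t| ≤ V0 := by
    rw [htdef, abs_div, abs_of_pos hj0, div_le_iff₀ hj0]
    calc |u| ≤ nv * nx := hu
      _ ≤ V0 * j := by nlinarith only [hnv, hnvV, hnx0, hnxj, hj0]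
  have hst : s * t = |t| := by
    rw [htdef, abs_div, abs_of_pos hj0, ← hsu, mul_div_assoc]
  have hq0 : 0 ≤ q := by
    rw [hqdef, sub_nonneg, div_le_div_iff₀ (by positivity) hj0]
    have h1 : u ^ 2 ≤ nv ^ 2 * nx ^ 2 := by
      have h := mul_self_le_mul_self (abs_nonneg u) hu
      nlinarith only [h, sq_abs u]
    have h2 : nx ^ 2 ≤ j ^ 2 := by nlinarith only [hjnx]
    nlinarith only [mul_le_mul_of_nonneg_right h1 hj0.le,
      mul_le_mul_of_nonneg_left h2 (mul_nonneg (sq_nonneg nv) hj0.le)]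
  have hqjeq : q * j = nv ^ 2 - u ^ 2 / j ^ 2 := by
    rw [hqdef]; field_simp
  have hqj : q * j ≤ V0 ^ 2 := by
    rw [hqjeq]
    have h3 : 0 ≤ u ^ 2 / j ^ 2 := by positivity
    nlinarith only [h3, hnv, hnvV]
  have hqV : q ≤ V0 ^ 2 := by nlinarith only [hqj, hq0, hj1]
  have hA1 : |A - 1| ≤ 2 * γ * V0 := by
    have heq : A - 1 = γ * t - β * |t| := by rw [hAdef, hst]; ring
    rw [heq, abs_le]
    constructor
    · nlinarith only [abs_nonneg t, le_abs_self t, neg_abs_le t, htV, hγ0, hβ0, hβγ]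
    · nlinarith only [abs_nonneg t, le_abs_self t, neg_abs_le t, htV, hγ0, hβ0, hβγ]
  have hγV : γ * (V0 + 1) ^ 2 ≤ 1 / 4 := by
    rw [le_div_iff₀ (by positivity : (0:ℝ) < 4 * (V0+1)^2)] at hγa
    linarith
  have hγV' : γ * V0 ≤ 1 / 4 := by
    nlinarith only [hγV, hγ0, hV0]
  have hAlow : 1 / 2 ≤ A := by
    have h := (abs_le.1 hA1).1
    linarith
  have hAhigh : A ≤ 3 / 2 := by
    have h := (abs_le.1 hA1).2
    linarith
  set K := 1 + χ * s with hKdef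
  have hKlow : 1 - χ ≤ K := by
    rw [hKdef]; nlinarith only [hs1.1, hχ0]
  have hKhigh : K ≤ 1 + χ := by
    rw [hKdef]; nlinarith only [hs1.2, hχ0]
  have hK0 : 0 < K := by linarith
  have hw0 : 0 ≤ w := by rw [hwdef]; positivity
  have hw1 : w ≤ 1 := by rw [hwdef, div_le_one hj0]; exact hnxj
  set Iv := 1 - β * c0 * w with hIvdef
  have hβc : β * c0 ≤ γ * V0 := by
    nlinarith only [hβγ, hc0V, hβ0, hc0, hV0]
  have hIvlow : 3 / 4 ≤ Iv := by
    rw [hIvdef]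
    nlinarith only [hβc, hw0, hw1, hγV', mul_nonneg hβ0.le hc0.le, hγ0, hV0]
  have hwhalf' : 1 ≤ nx → 1 / 2 ≤ w := by
    intro hnx1
    have hj2nx : j ≤ 2 * nx := by nlinarith only [hjnx, hnx1, hj0, hnxj]
    rw [hwdef, le_div_iff₀ hj0]
    linarith
  have htpos' : 0 < u → 0 ≤ t := by
    intro h
    rw [htdef]
    positivity
  have htneg' : u < 0 → t ≤ 0 := by
    intro h
    rw [htdef]
    exact div_nonpos_of_nonpos_of_nonneg h.le hj0.le
  clear_value t q w A K Iv
  have hαle1 : α ≤ (1 - χ) / 2 := hα ▸ min_le_left _ _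
  have hαle2 : α ≤ (1 - χ) * β * c0 / 6 := hα ▸ min_le_right _ _
  have hα0 : 0 ≤ α := by
    rw [hα]
    refine le_min (by linarith) ?_
    have h := mul_pos (mul_pos (show (0:ℝ) < 1 - χ by linarith) hβ0) hc0
    linarith
  have hsd1 : γ - β * s ≤ 2 * γ := by nlinarith only [hs1.1, hβ0, hβγ]
  have hsd2 : 0 ≤ γ - β * s := by nlinarith only [hs1.2, hβ0, hβγ, hγ0]
  have e1 : (γ - β * s) * q ≤ 2 * γ * V0 ^ 2 :=
    mul_le_mul hsd1 hqV hq0 (by linarith)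
  rcases hcase with ⟨hnxR, hφx⟩ | hnxR
  · -- inner region : φx = 1
    rw [hφx]
    have hAt : A * t ≤ 3 / 2 * V0 := by
      have h1 : A * (V0 - t) ≥ 0 :=
        mul_nonneg (by linarith) (by linarith [le_abs_self t, htV])
      have h2 : A * V0 ≤ 3 / 2 * V0 := mul_le_mul_of_nonneg_right hAhigh hV0.le
      nlinarith only [h1, h2]
    have e2 : A * (γ * t) ≤ 3 / 2 * (γ * V0) := by
      have := mul_le_mul_of_nonneg_left hAt hγ0.le
      linarith [this]
    have e3 : (1 - χ) * A ≤ K * A := by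
      have : (K - (1 - χ)) * A ≥ 0 := mul_nonneg (by linarith) (by linarith)
      nlinarith only [this]
    have hγb' : γ * (20 * (V0 + 1) ^ 2) ≤ 1 - χ := by
      rw [le_div_iff₀ (by positivity : (0:ℝ) < 20 * (V0+1)^2)] at hγb
      linarith
    have h7 : 2 * γ * V0 ^ 2 + 3 / 2 * (γ * V0) ≤ (1 - χ) / 10 := by
      nlinarith only [hγb', mul_nonneg hγ0.le hV0.le, hγ0.le, sq_nonneg V0, hγ0, hV0]
    have hαA : α * A ≤ (1 - χ) / 2 * A :=
      mul_le_mul_of_nonneg_right hαle1 (by linarith)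
    have h8 : (1 - χ) / 4 ≤ (1 - χ) / 2 * A := by
      have := mul_le_mul_of_nonneg_left hAlow (by linarith : (0:ℝ) ≤ (1 - χ) / 2)
      linarith [this]
    have key : (γ - β * s) * q + A * (γ * t) - K * A ≤ -α * A := by
      linarith only [e1, e2, e3, h7, hαA, h8, hχ1]
    calc (γ - β * s) * q + A * (γ * t) + K * (Iv - A) - 1 * K * Iv
        = (γ - β * s) * q + A * (γ * t) - K * A := by ring
      _ ≤ -α * A := key
  · -- outer region : R₀ ≤ nx
    have hR₀1 : (1:ℝ) ≤ R₀ := hR₀ ▸ le_max_left _ _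
    have hnx1 : (1:ℝ) ≤ nx := le_trans hR₀1 hnxR
    set ε := (1 - χ) * β * c0 / 2 with hεdef
    have hεpos : 0 < ε := by
      rw [hεdef]
      have h := mul_pos (mul_pos (show (0:ℝ) < 1 - χ by linarith) hβ0) hc0
      linarith
    have drop : (γ - β * s) * q + A * (γ * t) + K * (Iv - A) - φx * K * Iv
        ≤ (γ - β * s) * q + A * (γ * t) + K * (Iv - A) := by
      have : 0 ≤ φx * K * Iv := by positivity
      linarith
    have split : K * (Iv - A) = -(K * (β * c0 * w)) - K * ((γ - β * s) * t) := by
      rw [hIvdef, hAdef]; ring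
    -- drift bound
    have e5 : A * (γ * t) - K * ((γ - β * s) * t) ≤ 2 * γ ^ 2 * V0 ^ 2 := by
      rcases hs with ⟨hse, hupos⟩ | ⟨hse, huneg⟩
      · have hco : A * γ - K * (γ - β * s) = γ * (A - 1) := by
          rw [hKdef, hse, hβ]
          field_simp
          ring
        have h1 : A * (γ * t) - K * ((γ - β * s) * t) = γ * ((A - 1) * t) := by
          linear_combination hco * t
        rw [h1]
        have h2 : (A - 1) * t ≤ 2 * γ * V0 * V0 := by
          calc (A - 1) * t ≤ |(A - 1) * t| := le_abs_self _
            _ = |A - 1| * |t| := abs_mul _ _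
            _ ≤ (2 * γ * V0) * V0 :=
                mul_le_mul hA1 htV (abs_nonneg t) (by positivity)
        have := mul_le_mul_of_nonneg_left h2 hγ0.le
        nlinarith only [this]
      · have htneg : t ≤ 0 := htneg' huneg
        have hA' : 1 - 2 * γ * V0 ≤ A := by
          have := (abs_le.1 hA1).1; linarith
        have hβχ : β * (1 + χ) = γ * χ := by
          rw [hβ]; field_simp
        have hγc' : γ * (4 * (V0 + 1)) ≤ χ ^ 2 := by
          rw [le_div_iff₀ (by positivity : (0:ℝ) < 4 * (V0+1))] at hγc
          linarith
        have hC : 0 ≤ A * γ - K * (γ - β * s) := by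
          rw [hKdef, hse]
          have hbx : 2 * (β * χ) ≥ 4 * γ ^ 2 * V0 := by
            have hg := mul_le_mul_of_nonneg_left hγc' hγ0.le
            nlinarith only [hg, hβχ, mul_nonneg hβ0.le hχ0.le, hγ0, hχ1,
              mul_nonneg (mul_nonneg hβ0.le hχ0.le) hχ0.le]
          have hAg := mul_le_mul_of_nonneg_right hA' hγ0.le
          nlinarith only [hbx, hAg, hβχ, hγ0, hχ0, hβ0, hV0]
        have h1 : A * (γ * t) - K * ((γ - β * s) * t) = (A * γ - K * (γ - β * s)) * t := by
          ring
        rw [h1]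
        have := mul_nonpos_of_nonneg_of_nonpos hC htneg
        nlinarith only [this, sq_nonneg (γ * V0)]
    -- confinement bound
    have hwhalf : 1 / 2 ≤ w := hwhalf' hnx1
    have e6 : -(K * (β * c0 * w)) ≤ -ε := by
      rw [hεdef, neg_le_neg_iff]
      have h1 : (1 - χ) * (β * c0) ≤ K * (β * c0) :=
        mul_le_mul_of_nonneg_right hKlow (by positivity)
      have h2 : K * (β * c0) * (1/2) ≤ K * (β * c0) * w :=
        mul_le_mul_of_nonneg_left hwhalf (by positivity)
      linarith only [h1, h2]
    -- transport bound
    have e7 : (γ - β * s) * q ≤ ε / 4 := by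
      have hqR : q * R₀ ≤ V0 ^ 2 := by
        have h := mul_le_mul_of_nonneg_left (le_trans hnxR hnxj) hq0
        linarith [hqj, h]
      have hR₀2 : 8 * γ * (V0 + 1) ^ 2 / ε ≤ R₀ := by
        rw [hR₀, hεdef]; exact le_max_right _ _
      have hR₀pos : 0 < R₀ := lt_of_lt_of_le one_pos hR₀1
      have key2 : 8 * γ * (V0 + 1) ^ 2 ≤ ε * R₀ := by
        rw [div_le_iff₀ hεpos] at hR₀2
        linarith
      have h3 : (γ - β * s) * q * R₀ ≤ 2 * γ * V0 ^ 2 := by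
        have := mul_le_mul_of_nonneg_left hqR hsd2
        nlinarith only [this, hsd1, hqR, hq0, hR₀pos.le, mul_nonneg hq0 hR₀pos.le, hsd2]
      have h4 : 2 * γ * V0 ^ 2 ≤ ε / 4 * R₀ := by
        nlinarith only [key2, mul_nonneg hγ0.le hV0.le, hγ0, hV0,
          mul_nonneg (mul_nonneg hγ0.le hV0.le) hV0.le]
      nlinarith only [h3, h4, hR₀pos]
    -- smallness of drift vs ε
    have e8 : 2 * γ ^ 2 * V0 ^ 2 ≤ ε / 4 := by
      have hβχ : β * (1 + χ) = γ * χ := by rw [hβ]; field_simp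
      have hγd' : γ * (32 * (V0 + 1) ^ 2 * (1 + χ)) ≤ (1 - χ) * χ * c0 := by
        rw [le_div_iff₀ (by positivity : (0:ℝ) < 32 * (V0+1)^2 * (1+χ))] at hγd
        linarith
      have step : 32 * γ ^ 2 * (V0 + 1) ^ 2 ≤ (1 - χ) * β * c0 := by
        have hg := mul_le_mul_of_nonneg_left hγd' hγ0.le
        have hβχ' : (1 - χ) * c0 * (β * (1 + χ)) = (1 - χ) * c0 * (γ * χ) := by
          rw [hβχ]
        have key3 : 32 * γ ^ 2 * (V0 + 1) ^ 2 * (1 + χ) ≤ (1 - χ) * β * c0 * (1 + χ) := by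
          linarith only [hg, hβχ']
        nlinarith only [key3, hχ0]
      rw [hεdef]
      nlinarith only [step, mul_nonneg (mul_nonneg (sq_nonneg γ) hV0.le) hV0.le,
        sq_nonneg γ, mul_nonneg (sq_nonneg γ) hV0.le]
    have hfin : -ε + ε / 4 + ε / 4 ≤ -α * A := by
      have h1 : α * A ≤ α * (3 / 2) :=
        mul_le_mul_of_nonneg_left hAhigh hα0
      have h2 : α * (3 / 2) ≤ ε / 2 := by
        rw [hεdef]; linarith [hαle2]
      linarith
    calc (γ - β * s) * q + A * (γ * t) + K * (Iv - A) - φx * K * Iv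
        ≤ (γ - β * s) * q + A * (γ * t) + K * (Iv - A) := drop
      _ = (γ - β * s) * q + (A * (γ * t) - K * ((γ - β * s) * t)) + (-(K * (β * c0 * w))) := by
          rw [split]; ring
      _ ≤ ε / 4 + 2 * γ ^ 2 * V0 ^ 2 + (-ε) := by linarith [e5, e6, e7]
      _ ≤ ε / 4 + ε / 4 + (-ε) := by linarith [e8]
      _ ≤ -α * A := by linarith [hfin]

set_option maxHeartbeats 4000000 in
/-- dissipativity inequality `B₁* m̃ ≤ -α m̃` for the truncated operator `B₁`. -/
theorem stmt9 (d : ℕ) (hd : 1 ≤ d) (χ : ℝ) (hχ : χ ∈ Set.Ioo (0:ℝ) 1)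
    (V0 : ℝ) (hV0 : 0 < V0) (hvol : volume (VV d V0) = 1)
(Φ : E d → ℝ) (hΦsm : ContDiff ℝ (⊤ : ℕ∞) Φ) (hΦc : HasCompactSupport Φ)
    (hΦrad : ∀ x y : E d, ‖x‖ = ‖y‖ → Φ x = Φ y)
    (hΦ01 : ∀ x : E d, Φ x ∈ Set.Icc (0:ℝ) 1)
    (hΦone : ∀ x : E d, ‖x‖ ≤ 1 → Φ x = 1)
    (hΦzero : ∀ x : E d, 2 < ‖x‖ → Φ x = 0) :
    ∃ γstar : ℝ, 0 < γstar ∧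
      ∀ γ ∈ Set.Ioo (0:ℝ) γstar, ∀ β : ℝ, β = γ * χ / (1 + χ) →
        ∃ R₀ : ℝ, 1 ≤ R₀ ∧ ∃ α : ℝ, 0 < α ∧
          ∀ R : ℝ, R₀ ≤ R → ∀ x : E d, ∀ v ∈ VV d V0, ⟪x, v⟫ ≠ 0 →
            Ldual χ V0 (fun p => mtilde γ β p.1 p.2) x v
                - Φ (R⁻¹ • x) * turnK χ x v * (∫ v' in VV d V0, mtilde γ β x v')
              ≤ -α * mtilde γ β x v := by
  obtain ⟨hχ0, hχ1⟩ := hχ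
  set c0 : ℝ := ∫ v in VV d V0, |⟪EuclideanSpace.single (⟨0, hd⟩ : Fin d) (1:ℝ),v⟫|
    with hc0def
  have hc0 : 0 < c0 := c0_pos hd hvol
  have hc0V : c0 ≤ V0 := c0_le hd hV0 hvol
  have hχ1' : (0:ℝ) < 1 + χ := by linarith
  refine ⟨min (min (1 / (4 * (V0 + 1) ^ 2)) ((1 - χ) / (20 * (V0 + 1) ^ 2)))
      (min (χ ^ 2 / (4 * (V0 + 1))) ((1 - χ) * χ * c0 / (32 * (V0 + 1) ^ 2 * (1 + χ)))),
    ?_, ?_⟩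
  · have h1 : (0:ℝ) < 1 / (4 * (V0 + 1) ^ 2) := by positivity
    have h2 : (0:ℝ) < (1 - χ) / (20 * (V0 + 1) ^ 2) := by
      apply div_pos (by linarith) (by positivity)
    have h3 : (0:ℝ) < χ ^ 2 / (4 * (V0 + 1)) := by positivity
    have h4 : (0:ℝ) < (1 - χ) * χ * c0 / (32 * (V0 + 1) ^ 2 * (1 + χ)) := by
      apply div_pos (mul_pos (mul_pos (by linarith) hχ0) hc0) (by positivity)
    exact lt_min (lt_min h1 h2) (lt_min h3 h4)
  intro γ hγ β hβ
  obtain ⟨hγ0, hγlt⟩ := hγ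
  have hγa : γ ≤ 1 / (4 * (V0 + 1) ^ 2) :=
    le_of_lt (lt_of_lt_of_le hγlt (le_trans (min_le_left _ _) (min_le_left _ _)))
  have hγb : γ ≤ (1 - χ) / (20 * (V0 + 1) ^ 2) :=
    le_of_lt (lt_of_lt_of_le hγlt (le_trans (min_le_left _ _) (min_le_right _ _)))
  have hγc : γ ≤ χ ^ 2 / (4 * (V0 + 1)) :=
    le_of_lt (lt_of_lt_of_le hγlt (le_trans (min_le_right _ _) (min_le_left _ _)))
  have hγd : γ ≤ (1 - χ) * χ * c0 / (32 * (V0 + 1) ^ 2 * (1 + χ)) :=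
    le_of_lt (lt_of_lt_of_le hγlt (le_trans (min_le_right _ _) (min_le_right _ _)))
  have hβ0 : 0 < β := by rw [hβ]; positivity
  refine ⟨max 1 (8 * γ * (V0 + 1) ^ 2 / ((1 - χ) * β * c0 / 2)), le_max_left _ _,
    min ((1 - χ) / 2) ((1 - χ) * β * c0 / 6), ?_, ?_⟩
  · refine lt_min (by linarith) ?_
    have h := mul_pos (mul_pos (show (0:ℝ) < 1 - χ by linarith) hβ0) hc0
    linarith
  intro R hR x v hv huxv
  set R₀ : ℝ := max 1 (8 * γ * (V0 + 1) ^ 2 / ((1 - χ) * β * c0 / 2)) with hR₀def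
  set α : ℝ := min ((1 - χ) / 2) ((1 - χ) * β * c0 / 6) with hαdef
  have hu : ⟪v,x⟫ ≠ 0 := by
    rw [real_inner_comm]; exact huxv
  have hnvV : ‖v‖ ≤ V0 := by simpa [VV, mem_closedBall, dist_zero_right] using hv
  -- sign case information
  have hs : Real.sign ⟪v,x⟫ = 1 ∧ 0 < ⟪v,x⟫ ∨ Real.sign ⟪v,x⟫ = -1 ∧ ⟪v,x⟫ < 0 := by
    rcases hu.lt_or_gt with h | h
    · exact Or.inr ⟨Real.sign_of_neg h, h⟩
    · exact Or.inl ⟨Real.sign_of_pos h, h⟩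
  have habsu : |⟪v,x⟫| = Real.sign ⟪v,x⟫ * ⟪v,x⟫ := by
    rcases hu.lt_or_gt with h | h
    · rw [Real.sign_of_neg h, abs_of_neg h]; ring
    · rw [Real.sign_of_pos h, abs_of_pos h]; ring
  -- case analysis for the cut-off
  have hR1 : (1:ℝ) ≤ R := le_trans (le_max_left _ _) hR
  have hcase : (‖x‖ < R₀ ∧ Φ (R⁻¹ • x) = 1) ∨ R₀ ≤ ‖x‖ := by
    rcases lt_or_ge ‖x‖ R₀ with h | h
    · refine Or.inl ⟨h, hΦone _ ?_⟩
      rw [norm_smul, norm_inv, Real.norm_eq_abs, abs_of_pos (by linarith : (0:ℝ) < R)]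
      rw [inv_mul_le_one₀ (by linarith : (0:ℝ) < R)]
      calc ‖x‖ ≤ R₀ := h.le
        _ ≤ R := hR
    · exact Or.inr h
  -- the core scalar inequality
  have hP := scalar_core χ γ β c0 V0 (Real.sign ⟪v,x⟫) ⟪v,x⟫ (jap x) ‖x‖ ‖v‖
    (Φ (R⁻¹ • x)) α R₀ hχ0 hχ1 hV0 hβ hγ0 hc0 hc0V hs (one_le_jap x) (jap_sq x)
    (norm_nonneg x) (abs_real_inner_le_norm v x) (norm_nonneg v) hnvV
    (hΦ01 _).1 (hΦ01 _).2 hγa hγb hγc hγd hαdef hR₀def hcase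
  -- rewrite the goal
  rw [Ldual, turnK, fderiv_mtilde γ β x v hu, real_inner_comm v x]
  have hintv : IntegrableOn (fun v' : E d => mtilde γ β x v') (VV d V0) :=
    integrableOn_VV (continuous_mtilde_v γ β x)
  have hsub : ∫ v' in VV d V0, (mtilde γ β x v' - mtilde γ β x v)
      = (∫ v' in VV d V0, mtilde γ β x v') - mtilde γ β x v := by
    rw [integral_sub hintv (integrableOn_const (by rw [hvol]; norm_num))]
    rw [setIntegral_const, measureReal_def, hvol]
    simp
  rw [hsub, integral_mtilde hd hvol γ β x, ← hc0def]
  simp only [mtilde]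
  rw [habsu]
  have hEx := Real.exp_pos (γ * jap x)
  have hfinal := mul_le_mul_of_nonneg_right hP hEx.le
  linarith only [hfinal]
end
end

section
/- (Kato's inequality for ℒ.) Let f : ℝ^d × 𝒱 → ℂ be continuously differentiable in the variable x, with f(x,·) integrable over 𝒱 for each x. Then at every point (x,v) ∈ ℝ^d × 𝒱 with f(x,v) ≠ 0 one has Re( (conj(f(x,v)) / |f(x,v)|) · (ℒ f)(x,v) ) ≤ (ℒ |f|)(x,v), where (ℒ g)(x,v) := −v·∇ₓ g(x,v) + ∫_𝒱 [K(x,v') g(x,v') − K(x,v) g(x,v)] dv' and the gradient ∇ₓ|f| exists at every point where f ≠ 0. -/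
open MeasureTheory Metric Real Filter
open scoped RealInnerProductSpace ENNReal FourierTransform

noncomputable section

/-- The run-and-tumble operator acting on complex valued functions. -/
def LopC {d : ℕ} (χ V0 : ℝ) (g : E d → E d → ℂ) (x v : E d) : ℂ :=
  -(fderiv ℝ (fun y => g y v) x v) +
    ∫ v' in VV d V0, ((turnK χ x v' : ℂ) * g x v' - (turnK χ x v : ℂ) * g x v)

/-- The run-and-tumble operator acting on real valued functions. -/
def LopR {d : ℕ} (χ V0 : ℝ) (g : E d → E d → ℝ) (x v : E d) : ℝ :=
  -(fderiv ℝ (fun y => g y v) x v) +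
    ∫ v' in VV d V0, (turnK χ x v' * g x v' - turnK χ x v * g x v)

lemma measurable_realSign : Measurable Real.sign := by
  have : Real.sign = fun r : ℝ => if r < 0 then (-1:ℝ) else if 0 < r then 1 else 0 := by
    funext r; rfl
  rw [this]
  exact Measurable.ite (measurableSet_lt measurable_id measurable_const) measurable_const
    (Measurable.ite (measurableSet_lt measurable_const measurable_id) measurable_const
      measurable_const)

/-- Kato's inequality `(sign f) ℒf ≤ ℒ|f|` pointwise where `f ≠ 0`. -/
theorem stmt12 (d : ℕ) (hd : 1 ≤ d) (χ : ℝ) (hχ : χ ∈ Set.Ioo (0:ℝ) 1)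
    (V0 : ℝ) (hV0 : 0 < V0) (hvol : volume (VV d V0) = 1)
    (f : E d → E d → ℂ)
    (hf : ∀ v : E d, ContDiff ℝ 1 (fun x => f x v))
    (hfint : ∀ x : E d, IntegrableOn (f x) (VV d V0)) :
    ∀ x : E d, ∀ v ∈ VV d V0, f x v ≠ 0 →
      ((starRingEnd ℂ (f x v) / (‖f x v‖ : ℂ)) * LopC χ V0 f x v).re
        ≤ LopR χ V0 (fun y w => ‖f y w‖) x v := by
  intro x v hv hne
  set F : ℂ := f x v with hF
  set c : ℝ := ‖F‖ with hc
  have hcpos : (0:ℝ) < c := norm_pos_iff.mpr hne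
  set s : ℂ := starRingEnd ℂ F / (c : ℂ) with hs
  -- s as real scalar times conj
  have hs' : s = (c⁻¹ : ℝ) * starRingEnd ℂ F := by
    rw [hs]; push_cast; ring
  have hre : ∀ z : ℂ, (s * z).re = c⁻¹ * (starRingEnd ℂ F * z).re := by
    intro z
    rw [hs', mul_assoc, Complex.re_ofReal_mul]
  have hsF : (s * F).re = c := by
    rw [hre, ← Complex.normSq_eq_conj_mul_self]
    simp only [Complex.ofReal_re]
    rw [← Complex.sq_norm, ← hc, sq]
    field_simp
  have hsabs : ∀ z : ℂ, (s * z).re ≤ ‖z‖ := by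
    intro z
    calc (s * z).re ≤ ‖s * z‖ := Complex.re_le_norm _
      _ = ‖s‖ * ‖z‖ := norm_mul _ _
      _ ≤ 1 * ‖z‖ := by
          have h1 : ‖s‖ = 1 := by
            rw [hs, norm_div, Complex.norm_conj, Complex.norm_of_nonneg hcpos.le, ← hc,
              div_self (ne_of_gt hcpos)]
          rw [h1]
      _ = ‖z‖ := one_mul _
  -- K bounds
  have hKsign : ∀ r : ℝ, -1 ≤ Real.sign r ∧ Real.sign r ≤ 1 := by
    intro r; rcases Real.sign_apply_eq r with h | h | h <;> rw [h] <;> norm_num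
  have hKpos : ∀ w : E d, 0 ≤ turnK χ x w := by
    intro w
    have := (hKsign ⟪x, w⟫).1
    have h2 : χ * Real.sign ⟪x, w⟫ ≥ χ * (-1) := by
      apply mul_le_mul_of_nonneg_left this hχ.1.le
    unfold turnK; nlinarith [hχ.2]
  have hKbd : ∀ w : E d, |turnK χ x w| ≤ 2 := by
    intro w
    have h1 := (hKsign ⟪x, w⟫).1
    have h2 := (hKsign ⟪x, w⟫).2
    unfold turnK
    rw [abs_le]
    constructor <;> nlinarith [hχ.1, hχ.2]
  -- derivative of |f|
  have hfd : HasFDerivAt (fun y => f y v) (fderiv ℝ (fun y => f y v) x) x :=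
    (((hf v).differentiable one_ne_zero) x).hasFDerivAt
  set L : E d →L[ℝ] ℂ := fderiv ℝ (fun y => f y v) x with hL
  have hsq : HasFDerivAt (fun y => ‖f y v‖ ^ 2) (2 • (innerSL ℝ F).comp L) x := hfd.norm_sq
  have hFn : ‖F‖ ^ 2 ≠ 0 := by
    have : ‖F‖ = c := hc.symm
    rw [this]; positivity
  have hroot : HasDerivAt Real.sqrt (1 / (2 * Real.sqrt (‖F‖ ^ 2))) (‖F‖ ^ 2) :=
    Real.hasDerivAt_sqrt hFn
  have habs : HasFDerivAt (fun y => ‖f y v‖) (c⁻¹ • ((innerSL ℝ F).comp L)) x := by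
    have h := hroot.comp_hasFDerivAt x hsq
    have hfun : (Real.sqrt ∘ fun y => ‖f y v‖ ^ 2) = fun y => ‖f y v‖ := by
      funext y
      simp [Function.comp, Real.sqrt_sq (norm_nonneg _)]
    have hder : (1 / (2 * Real.sqrt (‖F‖ ^ 2))) • (2 • (innerSL ℝ F).comp L)
        = c⁻¹ • ((innerSL ℝ F).comp L) := by
      ext w
      simp only [ContinuousLinearMap.smul_apply, smul_eq_mul, two_smul]
      rw [Real.sqrt_sq (norm_nonneg _), ← hc]
      field_simp
      simp only [ContinuousLinearMap.add_apply]
      ring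
    rw [hfun, hder] at h
    exact h
  have hfder : fderiv ℝ (fun y => ‖f y v‖) x = c⁻¹ • ((innerSL ℝ F).comp L) :=
    habs.fderiv
  -- value of derivative term
  have hderval : (fderiv ℝ (fun y => ‖f y v‖) x : E d →L[ℝ] ℝ) v = (s * L v).re := by
    rw [hfder, hre]
    simp only [ContinuousLinearMap.smul_apply, ContinuousLinearMap.comp_apply, innerSL_apply_apply,
      smul_eq_mul]
    rw [Complex.inner, mul_comm (L v)]
  -- integrability
  have hmeasK : Measurable fun w : E d => turnK χ x w := by
    unfold turnK
    exact (measurable_const.add ((measurable_realSign.comp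
      ((continuous_const.inner continuous_id).measurable)).const_mul χ))
  have hμfin : volume (VV d V0) < ⊤ := by rw [hvol]; exact ENNReal.one_lt_top
  have h1C : IntegrableOn (fun w => (turnK χ x w : ℂ) * f x w) (VV d V0) := by
    apply Integrable.bdd_mul (c := 2) (hfint x)
    · exact (Complex.measurable_ofReal.comp hmeasK).aestronglyMeasurable
    · exact Filter.Eventually.of_forall (fun w => by
        rw [Complex.norm_real, Real.norm_eq_abs]; exact hKbd w)
  have h2C : IntegrableOn (fun _ : E d => (turnK χ x v : ℂ) * F) (VV d V0) :=
    integrableOn_const hμfin.ne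
  have hgC : IntegrableOn
      (fun w => (turnK χ x w : ℂ) * f x w - (turnK χ x v : ℂ) * F) (VV d V0) := h1C.sub h2C
  have h1R : IntegrableOn (fun w => turnK χ x w * ‖f x w‖) (VV d V0) := by
    have hn : IntegrableOn (fun w => ‖f x w‖) (VV d V0) := by
      have := (hfint x).norm
      exact this
    apply Integrable.bdd_mul (c := 2) hn hmeasK.aestronglyMeasurable
    exact Filter.Eventually.of_forall (fun w => by rw [Real.norm_eq_abs]; exact hKbd w)
  have h2R : IntegrableOn (fun _ : E d => turnK χ x v * c) (VV d V0) :=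
    integrableOn_const hμfin.ne
  have hgR : IntegrableOn
      (fun w => turnK χ x w * ‖f x w‖ - turnK χ x v * c) (VV d V0) := h1R.sub h2R
  -- integral inequality
  have hkey : (s * ∫ w in VV d V0, ((turnK χ x w : ℂ) * f x w - (turnK χ x v : ℂ) * F)).re
      ≤ ∫ w in VV d V0, (turnK χ x w * ‖f x w‖ - turnK χ x v * c) := by
    rw [← integral_const_mul]
    rw [show (∫ w in VV d V0, s * ((turnK χ x w : ℂ) * f x w - (turnK χ x v : ℂ) * F)).re
        = RCLike.re (∫ w in VV d V0, s * ((turnK χ x w : ℂ) * f x w - (turnK χ x v : ℂ) * F))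
        from rfl]
    rw [← integral_re (hgC.const_mul s)]
    apply integral_mono ((hgC.const_mul s).re) hgR
    intro w
    simp only
    have expand : (s * ((turnK χ x w : ℂ) * f x w - (turnK χ x v : ℂ) * F)).re
        = turnK χ x w * (s * f x w).re - turnK χ x v * (s * F).re := by
      have : s * ((turnK χ x w : ℂ) * f x w - (turnK χ x v : ℂ) * F)
          = (turnK χ x w : ℂ) * (s * f x w) - (turnK χ x v : ℂ) * (s * F) := by ring
      rw [this, Complex.sub_re, Complex.re_ofReal_mul, Complex.re_ofReal_mul]
    rw [RCLike.re_to_complex, expand, hsF]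
    have := mul_le_mul_of_nonneg_left (hsabs (f x w)) (hKpos w)
    linarith
  -- assemble
  show (s * LopC χ V0 f x v).re ≤ _
  unfold LopC LopR
  rw [mul_add, Complex.add_re]
  rw [hderval]
  have : (s * -(L v)).re = -(s * L v).re := by
    rw [mul_neg, Complex.neg_re]
  rw [← hL, this]
  have goal2 := hkey
  simp only [← hF, ← hc] at *
  linarith [hkey]
end
end
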